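/- arXiv:math/0312486 — 2 statements merged into one kernel-verified Lean document; each statement's English description precedes it below -/
import Mathlib

section
/- Let R be an F-finite F-pure reduced ring of characteristic p > 0 and a ⊆ R an ideal with a ∩ R° ≠ ∅. Assume that for every prime ideal P of R that does not contain a, the localization R_P is a strongly F-regular ring. Then c(a) = sup{ s ∈ ℝ_{≥0} : the pair (R, a^s) is strongly F-regular }. -/
/-! Basic notions for F-pure thresholds (Takagi–Watanabe).
Fix a prime `p`. For `q = p ^ e`, `SplitsFrob R q d` says that the map
`d^{1/q} R ↪ R^{1/q}` splits as an `R`-module homomorphism: equivalently, there is an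
additive map `ψ : R → R` with `ψ (r ^ q * x) = r * ψ x` for all `r x : R` and `ψ d = 1`. -/
def SplitsFrob (R : Type*) [CommRing R] (q : ℕ) (d : R) : Prop :=
  ∃ ψ : R →+ R, (∀ r x : R, ψ (r ^ q * x) = r * ψ x) ∧ ψ d = 1

/-- `R°`: the set of elements of `R` not contained in any minimal prime of `R`. -/
def Rcirc (R : Type*) [CommRing R] : Set R :=
  {x : R | ∀ P ∈ minimalPrimes R, x ∉ P}

/-- The pair `(R, a^t)` is F-pure: for all sufficiently large `q = p ^ e` there exists
`d ∈ a ^ ⌊t (q - 1)⌋` such that `d^{1/q} R ↪ R^{1/q}` splits. -/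
def FPurePair (R : Type*) [CommRing R] (p : ℕ) (a : Ideal R) (t : ℝ) : Prop :=
  ∃ e₀ : ℕ, ∀ e : ℕ, e₀ ≤ e →
    ∃ d ∈ a ^ ⌊t * ((p : ℝ) ^ e - 1)⌋₊, SplitsFrob R (p ^ e) d

/-- The pair `(R, a^t)` is strongly F-pure: there exist `q = p ^ e` and
`d ∈ a ^ ⌈t q⌉` such that `d^{1/q} R ↪ R^{1/q}` splits. -/
def StronglyFPurePair (R : Type*) [CommRing R] (p : ℕ) (a : Ideal R) (t : ℝ) : Prop :=
  ∃ e : ℕ, ∃ d ∈ a ^ ⌈t * (p : ℝ) ^ e⌉₊, SplitsFrob R (p ^ e) d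

/-- The pair `(R, a^t)` is strongly F-regular: for every `c ∈ R°` there exist `q = p ^ e`
and `d ∈ a ^ ⌈t q⌉` such that `(c d)^{1/q} R ↪ R^{1/q}` splits. -/
def StronglyFRegularPair (R : Type*) [CommRing R] (p : ℕ) (a : Ideal R) (t : ℝ) : Prop :=
  ∀ c ∈ Rcirc R, ∃ e : ℕ, ∃ d ∈ a ^ ⌈t * (p : ℝ) ^ e⌉₊, SplitsFrob R (p ^ e) (c * d)

/-- `R` is F-pure: for every `q = p ^ e`, the map `R ↪ R^{1/q}` splits. -/
def FPureRing (R : Type*) [CommRing R] (p : ℕ) : Prop :=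
  ∀ e : ℕ, SplitsFrob R (p ^ e) 1

/-- `R` is strongly F-regular: for every `c ∈ R°` there is `q = p ^ e` such that
`c^{1/q} R ↪ R^{1/q}` splits. -/
def StronglyFRegularRing (R : Type*) [CommRing R] (p : ℕ) : Prop :=
  ∀ c ∈ Rcirc R, ∃ e : ℕ, SplitsFrob R (p ^ e) c

/-- `R` is F-finite: `R^{1/p}` is a finitely generated `R`-module; equivalently, there is a
finite set `s` such that every element of `R` is an `R^p`-linear combination of `s`. -/
def FFinite (R : Type*) [CommRing R] (p : ℕ) : Prop :=
  ∃ s : Finset R, ∀ x : R, ∃ c : R → R, x = ∑ y ∈ s, c y ^ p * y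

/-- The F-pure threshold `c(a)` of an ideal `a`. -/
noncomputable def fpt (R : Type*) [CommRing R] (p : ℕ) (a : Ideal R) : ℝ :=
  sSup {s : ℝ | 0 ≤ s ∧ FPurePair R p a s}

/-- The height of an ideal: the infimum of the heights of the primes containing it. -/
noncomputable def idealHeight {R : Type*} [CommRing R] (I : Ideal R) : ℕ∞ :=
  ⨅ (P : PrimeSpectrum R) (_ : I ≤ P.asIdeal), Order.height P

/-! The inclusion `≥` holds because a strongly F-regular pair is F-pure (test with `c = 1` and
compose with a splitting of `R`). For `≤`, take `t < s` with `(R, a^s)` F-pure and a large `q`,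
so that some `b ∈ a^{⌊s(q-1)⌋}` has `b^{1/q}` split. Given `c ∈ R°`, the images of `c^{1/p^e}`
under `Hom_R(R^{1/p^e}, R)` form an increasing chain of ideals whose union has `a` in its radical:
at a prime `P` not containing `a`, the strongly F-regular local ring `R_P` splits `c`, and this
splitting descends to `R` because `R^{1/p^e}` is a finite `R`-module. So some `b^κ` is such an
image, and iterating the splitting of `b` absorbs the `κ` factors of `b`, leaving an exponent
above `t`. -/

section

variable {R : Type*} [CommRing R]

variable (R) in
/-- `ψ : R → R` is an `R`-linear map `R^{1/q} → R`. -/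
def IsFrobSemilinear (q : ℕ) (ψ : R →+ R) : Prop :=
  ∀ r x : R, ψ (r ^ q * x) = r * ψ x

namespace IsFrobSemilinear

variable {q q' : ℕ} {ψ ψ' : R →+ R}

lemma comp (hψ : IsFrobSemilinear R q ψ) (hψ' : IsFrobSemilinear R q' ψ') :
    IsFrobSemilinear R (q * q') (ψ.comp ψ') := fun r x => by
  rw [AddMonoidHom.comp_apply, pow_mul, hψ', hψ, AddMonoidHom.comp_apply]

lemma comp_mulLeft (hψ : IsFrobSemilinear R q ψ) (w : R) :
    IsFrobSemilinear R q (ψ.comp (AddMonoidHom.mulLeft w)) := fun r x => by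
  simp only [AddMonoidHom.comp_apply, AddMonoidHom.coe_mulLeft]
  rw [mul_left_comm, hψ]

lemma mulLeft_comp (hψ : IsFrobSemilinear R q ψ) (u : R) :
    IsFrobSemilinear R q ((AddMonoidHom.mulLeft u).comp ψ) := fun r x => by
  simp only [AddMonoidHom.comp_apply, AddMonoidHom.coe_mulLeft]
  rw [hψ, mul_left_comm]

lemma add (hψ : IsFrobSemilinear R q ψ) (hψ' : IsFrobSemilinear R q ψ') :
    IsFrobSemilinear R q (ψ + ψ') := fun r x => by
  simp only [AddMonoidHom.add_apply, hψ r x, hψ' r x, mul_add]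

lemma zero : IsFrobSemilinear R q 0 := fun r x => by simp

end IsFrobSemilinear

lemma SplitsFrob.comp_isFrobSemilinear {q q' : ℕ} {ψ : R →+ R} (hψ : IsFrobSemilinear R q' ψ)
    {x u v : R} (hx : ψ x = u) (h : SplitsFrob R q (u * v)) :
    SplitsFrob R (q * q') (v ^ q' * x) := by
  obtain ⟨φ, hφ, hφ1⟩ := h
  refine ⟨φ.comp ψ, IsFrobSemilinear.comp hφ hψ, ?_⟩
  rw [AddMonoidHom.comp_apply, hψ, hx, mul_comm, hφ1]

lemma SplitsFrob.pow_geomSum {q : ℕ} {b : R} (h : SplitsFrob R q b) (j : ℕ) :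
    SplitsFrob R (q ^ j) (b ^ ∑ i ∈ Finset.range j, q ^ i) := by
  induction j with
  | zero => exact ⟨AddMonoidHom.id R, fun r x => by simp, by simp⟩
  | succ j ih =>
    obtain ⟨θ, hθ, hθb⟩ := h
    rw [pow_succ, geom_sum_succ, pow_succ, mul_comm q, pow_mul]
    exact SplitsFrob.comp_isFrobSemilinear hθ hθb (by rwa [one_mul])

variable (R) in
/-- `{φ(c^{1/q}) | φ ∈ Hom_R(R^{1/q}, R)}`; the map `c^{1/q}R ↪ R^{1/q}` splits iff this ideal
is `⊤`. -/
def splittingIdeal (q : ℕ) (c : R) : Ideal R where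
  carrier := {y | ∃ ψ : R →+ R, IsFrobSemilinear R q ψ ∧ ψ c = y}
  add_mem' := by
    rintro _ _ ⟨ψ, hψ, rfl⟩ ⟨ψ', hψ', rfl⟩
    exact ⟨ψ + ψ', hψ.add hψ', rfl⟩
  zero_mem' := ⟨0, IsFrobSemilinear.zero, rfl⟩
  smul_mem' := by
    rintro r _ ⟨ψ, hψ, rfl⟩
    exact ⟨_, hψ.mulLeft_comp r, rfl⟩

lemma splittingIdeal_le_mul {q q' : ℕ} (hq' : q' ≠ 0) (h : SplitsFrob R q' 1) (c : R) :
    splittingIdeal R q c ≤ splittingIdeal R (q * q') c := by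
  rintro _ ⟨ψ, hψ, rfl⟩
  obtain ⟨θ, hθ, hθ1⟩ := h
  refine ⟨(ψ.comp θ).comp (AddMonoidHom.mulLeft (c ^ (q' - 1))),
    (hψ.comp hθ).comp_mulLeft _, ?_⟩
  simp only [AddMonoidHom.comp_apply, AddMonoidHom.coe_mulLeft, pow_sub_one_mul hq']
  rw [← mul_one (c ^ q'), hθ, hθ1, mul_one]

lemma monotone_splittingIdeal {p : ℕ} (hp : p ≠ 0) (hFP : FPureRing R p) (c : R) :
    Monotone fun e => splittingIdeal R (p ^ e) c :=
  monotone_nat_of_le_succ fun e => by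
    simpa only [pow_succ] using splittingIdeal_le_mul hp (by simpa using hFP 1) c

lemma algebraMap_mem_Rcirc {S : Submonoid R} {A : Type*} [CommRing A] [Algebra R A]
    [IsLocalization S A] {c : R} (hc : c ∈ Rcirc R) : algebraMap R A c ∈ Rcirc A := by
  intro Q hQ hcQ
  have hQ' : Q ∈ (Ideal.map (algebraMap R A) ⊥).minimalPrimes := by
    rwa [Ideal.map_bot]
  rw [IsLocalization.minimalPrimes_map S A] at hQ'
  exact hc _ hQ' hcQ

variable (R) in
/-- `F^E_* R`, i.e. `R^{1/q}` for `q = p ^ E`: the ring `R` as an `R`-module via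
`r • x = r ^ p ^ E * x`. -/
def FrobeniusPushforward (_p _E : ℕ) : Type _ := R

namespace FrobeniusPushforward

variable {p E : ℕ}

instance : AddCommGroup (FrobeniusPushforward R p E) := inferInstanceAs (AddCommGroup R)

variable (p E) in
def of : R ≃+ FrobeniusPushforward R p E := AddEquiv.refl R

variable [ExpChar R p]

instance : Module R (FrobeniusPushforward R p E) := (iterateFrobenius R p E).toModule

lemma smul_of (r x : R) : r • of p E x = of p E (r ^ p ^ E * x) := rfl

end FrobeniusPushforward

lemma FFinite.finite_frobeniusPushforward {p : ℕ} [ExpChar R p] (hFF : FFinite R p) (E : ℕ) :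
    Module.Finite R (FrobeniusPushforward R p E) := by
  open FrobeniusPushforward in
  induction E with
  | zero =>
    refine ⟨⟨{of p 0 1}, eq_top_iff.mpr fun x _ => ?_⟩⟩
    obtain ⟨x, rfl⟩ := (of p 0).surjective x
    have hx : x • of p 0 (1 : R) = of p 0 x := by rw [smul_of, pow_zero, pow_one, mul_one]
    exact hx ▸ Submodule.smul_mem _ x (Submodule.subset_span (Finset.mem_singleton_self _))
  | succ E ih =>
    obtain ⟨s, hs⟩ := ih.fg_top
    obtain ⟨s₁, hs₁⟩ := hFF
    set t : Set (FrobeniusPushforward R p (E + 1)) :=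
      Set.image2 (fun g y => of p (E + 1) ((of p E).symm g ^ p * y)) s s₁
    have key : ∀ m : FrobeniusPushforward R p E, ∀ y ∈ s₁,
        of p (E + 1) ((of p E).symm m ^ p * y) ∈ Submodule.span R t := by
      intro m y hy
      induction hs ▸ Submodule.mem_top (x := m) using Submodule.span_induction with
      | mem g hg => exact Submodule.subset_span (Set.mem_image2_of_mem hg hy)
      | zero => simp [zero_pow (expChar_pos R p).ne']
      | add a b _ _ ha hb =>
        simpa only [map_add, add_pow_expChar, add_mul] using Submodule.add_mem _ ha hb
      | smul r a _ ha =>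
        convert Submodule.smul_mem _ r ha using 1
        obtain ⟨a, rfl⟩ := (of p E).surjective a
        rw [smul_of, smul_of, AddEquiv.symm_apply_apply, AddEquiv.symm_apply_apply, mul_pow,
          ← pow_mul, ← pow_succ, mul_assoc]
    refine ⟨Submodule.fg_def.mpr ⟨t, s.finite_toSet.image2 _ s₁.finite_toSet,
      eq_top_iff.mpr fun x _ => ?_⟩⟩
    obtain ⟨x, rfl⟩ := (of p (E + 1)).surjective x
    obtain ⟨c, rfl⟩ := hs₁ x
    rw [map_sum]
    exact Submodule.sum_mem _ fun y hy => by
      simpa using key (of p E (c y)) y hy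

/-- `F^E_* R` is finitely presented, so `Hom_R(F^E_* R, -)` commutes with localization: a splitting
over `R_P`, times a unit, comes from a map over `R`. -/
lemma exists_isFrobSemilinear_apply_notMem_of_splitsFrob_atPrime [IsNoetherianRing R]
    {p E : ℕ} [ExpChar R p] [Module.Finite R (FrobeniusPushforward R p E)]
    (P : Ideal R) [P.IsPrime] {z : R}
    (h : SplitsFrob (Localization.AtPrime P) (p ^ E) (algebraMap R _ z)) :
    ∃ ψ : R →+ R, IsFrobSemilinear R (p ^ E) ψ ∧ ψ z ∉ P := by
  obtain ⟨Θ, hΘ, hΘz⟩ := h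
  have := Module.finitePresentation_of_finite R (FrobeniusPushforward R p E)
  let g : FrobeniusPushforward R p E →ₗ[R] Localization.AtPrime P :=
    { toFun := fun x => Θ (algebraMap R _ ((FrobeniusPushforward.of p E).symm x))
      map_add' := fun x y => by simp only [map_add]
      map_smul' := fun r x => by
        obtain ⟨x, rfl⟩ := (FrobeniusPushforward.of p E).surjective x
        simp only [FrobeniusPushforward.smul_of, AddEquiv.symm_apply_apply, map_mul, map_pow, hΘ,
          RingHom.id_apply, Algebra.smul_def] }
  obtain ⟨h, s, hs⟩ := Module.FinitePresentation.exists_lift_of_isLocalizedModule P.primeCompl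
    (Algebra.linearMap R (Localization.AtPrime P)) g
  refine ⟨h.toAddMonoidHom.comp (FrobeniusPushforward.of p E).toAddMonoidHom,
    fun r x => h.map_smul r _, fun hzP => ?_⟩
  have hz : algebraMap R (Localization.AtPrime P) (h (FrobeniusPushforward.of p E z)) =
      algebraMap R _ s := by
    have := LinearMap.congr_fun hs (FrobeniusPushforward.of p E z)
    simpa [g, hΘz, Submonoid.smul_def, Algebra.smul_def] using this
  obtain ⟨u, hu⟩ := (IsLocalization.eq_iff_exists P.primeCompl _).mp hz
  exact P.primeCompl.mul_mem u.2 s.2 (hu ▸ P.mul_mem_left _ hzP)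

lemma le_radical_iSup_splittingIdeal [IsNoetherianRing R] {p : ℕ} [ExpChar R p]
    (hFF : FFinite R p) {a : Ideal R}
    (hloc : ∀ (P : Ideal R) (hP : P.IsPrime), ¬ a ≤ P →
      StronglyFRegularRing (Localization.AtPrime P (hp := hP)) p)
    {c : R} (hc : c ∈ Rcirc R) :
    a ≤ (⨆ e, splittingIdeal R (p ^ e) c).radical := by
  rw [Ideal.radical_eq_sInf]
  refine le_sInf fun J ⟨hJ, hJprime⟩ => by_contra fun haJ => ?_
  obtain ⟨e, he⟩ := hloc J hJprime haJ _ (algebraMap_mem_Rcirc (S := J.primeCompl) hc)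
  have := hFF.finite_frobeniusPushforward e
  obtain ⟨ψ, hψ, hψc⟩ := exists_isFrobSemilinear_apply_notMem_of_splitsFrob_atPrime J he
  exact hψc (hJ (Ideal.mem_iSup_of_mem e ⟨ψ, hψ, rfl⟩))

lemma exists_pow_mem_splittingIdeal [IsNoetherianRing R] {p : ℕ} [ExpChar R p]
    (hFF : FFinite R p) (hFP : FPureRing R p) {a : Ideal R}
    (hloc : ∀ (P : Ideal R) (hP : P.IsPrime), ¬ a ≤ P →
      StronglyFRegularRing (Localization.AtPrime P (hp := hP)) p)
    {b c : R} (hb : b ∈ a) (hc : c ∈ Rcirc R) :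
    ∃ κ e : ℕ, b ^ κ ∈ splittingIdeal R (p ^ e) c := by
  obtain ⟨κ, hκ⟩ := le_radical_iSup_splittingIdeal hFF hloc hc hb
  have hdir := (monotone_splittingIdeal (expChar_pos R p).ne' hFP c).directed_le
  obtain ⟨e, he⟩ := (Submodule.mem_iSup_of_directed _ hdir).mp hκ
  exact ⟨κ, e, he⟩

/-- Since `(∑_{i<j} Q^i) (Q - 1) = Q^j - 1` and `M ≥ t (Q - 1) + 1`, the claim reduces to
`∑_{i<j} Q^i ≥ t + κ M`, which holds once `j ≥ ⌈t⌉ + κ M + κ`. -/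
lemma exists_mul_pow_le_mul_geomSum_sub {Q M : ℕ} {t : ℝ} (hQ : 1 ≤ Q)
    (hM : t * ((Q : ℝ) - 1) + 1 ≤ M) (κ : ℕ) :
    ∃ j, κ ≤ ∑ i ∈ Finset.range j, Q ^ i ∧
      t * (Q : ℝ) ^ j ≤ M * (((∑ i ∈ Finset.range j, Q ^ i : ℕ) : ℝ) - κ) := by
  set j := ⌈t⌉₊ + κ * M + κ
  have hj : j ≤ ∑ i ∈ Finset.range j, Q ^ i := by
    calc j = ∑ i ∈ Finset.range j, 1 := by simp
      _ ≤ _ := Finset.sum_le_sum fun i _ => Nat.one_le_pow _ _ hQ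
  refine ⟨j, by omega, ?_⟩
  have hgeo : (∑ i ∈ Finset.range j, (Q : ℝ) ^ i) * (Q - 1) = (Q : ℝ) ^ j - 1 :=
    geom_sum_mul _ _
  have hj' : ((⌈t⌉₊ + κ * M + κ : ℕ) : ℝ) ≤ ∑ i ∈ Finset.range j, (Q : ℝ) ^ i := by
    exact_mod_cast hj
  push_cast at hj' ⊢
  have hκ : (κ : ℝ) ≤ ∑ i ∈ Finset.range j, (Q : ℝ) ^ i := by
    nlinarith [Nat.le_ceil t, (Nat.cast_nonneg (κ * M) : (0 : ℝ) ≤ _)]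
  nlinarith [Nat.le_ceil t, mul_le_mul_of_nonneg_right hM (sub_nonneg.mpr hκ),
    mul_le_mul_of_nonneg_left hM (Nat.cast_nonneg κ : (0 : ℝ) ≤ κ)]

/-- With `q = p ^ e'`, the `j`-fold iterate of the splitting of `b` splits `b^{σ_j}`,
`σ_j = ∑_{i<j} q^i`; precomposed with a map sending `c` to `b^κ` it splits `c b^{(σ_j - κ) p^e}`,
whose `a`-adic order `≈ M q^j / (q - 1)` beats `t q^j`. -/
lemma exists_splitsFrob_mul_mem_pow {p : ℕ} (hp : p ≠ 0) {a : Ideal R} {t : ℝ} {b c : R}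
    {M e e' κ : ℕ} (hM : t * ((p : ℝ) ^ e' - 1) + 1 ≤ M) (hb : b ∈ a ^ M)
    (hsplit : SplitsFrob R (p ^ e') b) (hc : b ^ κ ∈ splittingIdeal R (p ^ e) c) :
    ∃ E, ∃ d ∈ a ^ ⌈t * (p : ℝ) ^ E⌉₊, SplitsFrob R (p ^ E) (c * d) := by
  obtain ⟨j, hκ, hj⟩ := exists_mul_pow_le_mul_geomSum_sub (Q := p ^ e')
    (Nat.one_le_pow _ _ (Nat.pos_of_ne_zero hp)) (by exact_mod_cast hM) κ
  set σ := ∑ i ∈ Finset.range j, (p ^ e') ^ i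
  obtain ⟨Ψ, hΨ, hΨc⟩ := hc
  refine ⟨e' * j + e, b ^ ((σ - κ) * p ^ e), ?_, ?_⟩
  · refine Ideal.pow_le_pow_right (Nat.ceil_le.mpr ?_) (pow_mul a M _ ▸ Ideal.pow_mem_pow hb _)
    have hp' : (0 : ℝ) ≤ (p : ℝ) ^ e := by positivity
    calc t * (p : ℝ) ^ (e' * j + e) = t * ((p : ℝ) ^ e') ^ j * (p : ℝ) ^ e := by ring
      _ ≤ M * ((σ : ℝ) - κ) * (p : ℝ) ^ e := by
        push_cast at hj
        exact mul_le_mul_of_nonneg_right hj hp'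
      _ = ((M * ((σ - κ) * p ^ e) : ℕ) : ℝ) := by push_cast [Nat.cast_sub hκ]; ring
  · have h := SplitsFrob.comp_isFrobSemilinear hΨ hΨc (v := b ^ (σ - κ))
      (by rw [← pow_add, Nat.add_sub_cancel' hκ]; exact hsplit.pow_geomSum j)
    rwa [← pow_mul, ← pow_mul, ← pow_add, mul_comm (b ^ _)] at h

lemma FPurePair.stronglyFRegularPair_of_lt [IsNoetherianRing R] {p : ℕ} [ExpChar R p]
    (hp : 1 < p) (hFF : FFinite R p) (hFP : FPureRing R p) {a : Ideal R}
    (hloc : ∀ (P : Ideal R) (hP : P.IsPrime), ¬ a ≤ P →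
      StronglyFRegularRing (Localization.AtPrime P (hp := hP)) p)
    {s t : ℝ} (ht : 0 ≤ t) (hts : t < s) (h : FPurePair R p a s) :
    StronglyFRegularPair R p a t := by
  obtain ⟨e₀, hpair⟩ := h
  have hp' : (1 : ℝ) < p := by exact_mod_cast hp
  obtain ⟨e₁, he₁⟩ := pow_unbounded_of_one_lt (2 / (s - t) + 1) hp'
  set e' := max e₀ e₁
  have hgap : 2 ≤ (s - t) * ((p : ℝ) ^ e' - 1) := by
    have := he₁.trans_le (pow_le_pow_right₀ hp'.le (le_max_right e₀ e₁))
    exact (div_le_iff₀' (sub_pos.mpr hts)).mp (by linarith)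
  obtain ⟨b, hb, hsplit⟩ := hpair e' (le_max_left _ _)
  have hM : t * ((p : ℝ) ^ e' - 1) + 1 ≤ ⌊s * ((p : ℝ) ^ e' - 1)⌋₊ := by
    linarith [Nat.lt_floor_add_one (s * ((p : ℝ) ^ e' - 1))]
  have hM0 : ⌊s * ((p : ℝ) ^ e' - 1)⌋₊ ≠ 0 := by
    have := mul_nonneg ht (sub_nonneg.mpr (one_le_pow₀ hp'.le : (1 : ℝ) ≤ (p : ℝ) ^ e'))
    exact_mod_cast (by linarith : (0 : ℝ) < ⌊s * ((p : ℝ) ^ e' - 1)⌋₊).ne'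
  intro c hc
  obtain ⟨κ, e, hκ⟩ := exists_pow_mem_splittingIdeal hFF hFP hloc (Ideal.pow_le_self hM0 hb) hc
  exact exists_splitsFrob_mul_mem_pow (by omega) hM hb hsplit hκ

lemma StronglyFRegularPair.fPurePair {p : ℕ} (hFP : FPureRing R p) {a : Ideal R} {s : ℝ}
    (hs : 0 ≤ s) (h : StronglyFRegularPair R p a s) : FPurePair R p a s := by
  obtain ⟨e, d, hd, hsplit⟩ := h 1 fun P hP => hP.1.1.one_notMem
  refine ⟨e, fun e' he' => ?_⟩
  obtain ⟨f, rfl⟩ := Nat.exists_eq_add_of_le he'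
  obtain ⟨θ, hθ, hθ1⟩ := hFP f
  refine ⟨d ^ p ^ f, ?_, ?_⟩
  · refine Ideal.pow_le_pow_right ?_ (pow_mul a _ (p ^ f) ▸ Ideal.pow_mem_pow hd _)
    refine Nat.floor_le_of_le ?_
    calc s * ((p : ℝ) ^ (e + f) - 1) ≤ s * (p : ℝ) ^ e * (p : ℝ) ^ f := by
          rw [pow_add, mul_assoc]; nlinarith
      _ ≤ ⌈s * (p : ℝ) ^ e⌉₊ * (p : ℝ) ^ f := by gcongr; exact Nat.le_ceil _
      _ = ((⌈s * (p : ℝ) ^ e⌉₊ * p ^ f : ℕ) : ℝ) := by push_cast; ring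
  · simpa [pow_add] using SplitsFrob.comp_isFrobSemilinear hθ hθ1 (v := d) (by simpa using hsplit)

lemma FPureRing.fPurePair_zero {p : ℕ} (hFP : FPureRing R p) (a : Ideal R) :
    FPurePair R p a 0 :=
  ⟨0, fun e _ => ⟨1, by simp, hFP e⟩⟩

lemma Real.sSup_eq_sSup_of_forall_lt_mem {S T : Set ℝ} (hTS : T ⊆ S) (h0 : 0 ∈ S)
    (hS : ∀ s ∈ S, 0 ≤ s) (hST : ∀ s ∈ S, ∀ t, 0 ≤ t → t < s → t ∈ T) :
    sSup S = sSup T := by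
  have key : ∀ B, 0 ≤ B → B ∈ upperBounds T → B ∈ upperBounds S := fun B hB0 hB s hs =>
    le_of_forall_lt_imp_le_of_dense fun t hts =>
      (le_total t 0).elim (fun ht => ht.trans hB0) fun ht => hB (hST s hs t ht hts)
  by_cases hbdd : BddAbove S
  · have hbddT := hbdd.mono hTS
    refine le_antisymm (csSup_le ⟨0, h0⟩ (key _ ?_ fun t ht => le_csSup hbddT ht))
      (Real.sSup_le (fun t ht => le_csSup hbdd (hTS ht)) (le_csSup hbdd h0))
    exact Real.sSup_nonneg fun t ht => hS t (hTS ht)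
  · have hbddT : ¬ BddAbove T := fun ⟨X, hX⟩ =>
      hbdd ⟨max X 0, key _ (le_max_right _ _) fun t ht => (hX ht).trans (le_max_left _ _)⟩
    rw [Real.sSup_of_not_bddAbove hbdd, Real.sSup_of_not_bddAbove hbddT]

end

theorem stmt4_general (R : Type*) [CommRing R] [IsNoetherianRing R]
    (p : ℕ) (hp : p.Prime) [CharP R p] (hFF : FFinite R p) (hFP : FPureRing R p)
    (a : Ideal R)
    (hloc : ∀ (P : Ideal R) (hP : P.IsPrime), ¬ a ≤ P →
      StronglyFRegularRing (Localization.AtPrime P (hp := hP)) p) :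
    fpt R p a = sSup {s : ℝ | 0 ≤ s ∧ StronglyFRegularPair R p a s} := by
  have : ExpChar R p := .prime hp
  refine Real.sSup_eq_sSup_of_forall_lt_mem (fun s hs => ⟨hs.1, hs.2.fPurePair hFP hs.1⟩)
    ⟨le_rfl, hFP.fPurePair_zero a⟩ (fun s hs => hs.1) fun s hs t ht hts => ⟨ht, ?_⟩
  exact hs.2.stronglyFRegularPair_of_lt hp.one_lt hFF hFP hloc ht hts

/-- if `R_P` is strongly F-regular for every prime `P` not containing `a`,
then `c(a)` equals the supremum of all `s ≥ 0` with `(R, aˢ)` strongly F-regular. -/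
theorem stmt4 (R : Type*) [CommRing R] [IsNoetherianRing R] [IsReduced R]
    (p : ℕ) (hp : p.Prime) [CharP R p] (hFF : FFinite R p) (hFP : FPureRing R p)
    (a : Ideal R) (ha : ((a : Set R) ∩ Rcirc R).Nonempty)
    (hloc : ∀ (P : Ideal R) (hP : P.IsPrime), ¬ a ≤ P →
      StronglyFRegularRing (Localization.AtPrime P (hp := hP)) p) :
    fpt R p a = sSup {s : ℝ | 0 ≤ s ∧ StronglyFRegularPair R p a s} :=
  stmt4_general R p hp hFF hFP a hloc
end

section
/- Let (R, m) be an F-finite F-pure reduced local ring of characteristic p > 0 and let a, b ⊆ R be ideals of positive height. Then c(a) + c(b) ≥ c(a + b). -/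
/-! Let `s < c(a + b)` and take `q = p ^ e` large with `d ∈ (a + b) ^ n`, `n = ⌊s (q - 1)⌋`,
split by some `ψ`. Expanding `(a + b) ^ n = ∑_{i + j = n} a ^ i b ^ j`, the element `d` is a sum of
elements of the `a ^ i b ^ j`; as `ψ d = 1` and `R` is local, one summand `x` has `ψ x` a unit, so
`x` is split as well. Then `(R, a ^ (i / q))` and `(R, b ^ (j / q))` are strongly F-pure, hence
F-pure because the Frobenius splitting of `R` pushes a splitting at level `q` to every level
`p ^ k q`. Thus `c(a) + c(b) ≥ n / q`, which tends to `s`. -/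

section FPureThreshold

open Finset Filter

variable {R : Type*} [CommRing R]

theorem Ideal.sup_pow_eq_sum_antidiagonal (a b : Ideal R) (n : ℕ) :
    (a ⊔ b) ^ n = ∑ m ∈ antidiagonal n, a ^ m.1 * b ^ m.2 := by
  rw [← Submodule.add_eq_sup, (Commute.all a b).add_pow']
  exact Finset.sum_congr rfl fun m hm =>
    nsmul_eq_self (Nat.choose_pos (HasAntidiagonal.antidiagonal.fst_le hm)).ne' _

theorem exists_isUnit_apply_of_mem_sum [IsLocalRing R] {ι : Type*} (ψ : R →+ R)
    {s : Finset ι} {I : ι → Ideal R} {d : R} (hd : d ∈ ∑ i ∈ s, I i) (hψd : IsUnit (ψ d)) :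
    ∃ i ∈ s, ∃ x ∈ I i, IsUnit (ψ x) := by
  by_contra! h
  rw [Ideal.sum_eq_sup] at hd
  have hsup : ∀ x ∈ s.sup I, ψ x ∈ IsLocalRing.maximalIdeal R :=
    Finset.sup_induction (p := fun J : Ideal R => ∀ x ∈ J, ψ x ∈ IsLocalRing.maximalIdeal R)
      (fun x hx => by simp [(Submodule.mem_bot R).mp hx])
      (fun J hJ K hK x hx => by
        obtain ⟨y, hy, z, hz, rfl⟩ := Submodule.mem_sup.mp hx
        simpa using add_mem (hJ y hy) (hK z hz))
      h
  exact hsup d hd hψd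

namespace SplitsFrob

theorem of_isUnit_apply {q : ℕ} {ψ : R →+ R} (hψ : ∀ r x : R, ψ (r ^ q * x) = r * ψ x)
    {d : R} (hd : IsUnit (ψ d)) : SplitsFrob R q d :=
  ⟨(AddMonoidHom.mulLeft ↑hd.unit⁻¹).comp ψ,
    fun r x => by simp only [AddMonoidHom.comp_apply, AddMonoidHom.coe_mulLeft, hψ, mul_left_comm],
    by simpa only [AddMonoidHom.comp_apply, AddMonoidHom.coe_mulLeft] using hd.val_inv_mul⟩

theorem comp {q q' : ℕ} {c d : R} (hc : SplitsFrob R q c) (hd : SplitsFrob R q' d) :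
    SplitsFrob R (q * q') (d ^ q * c) := by
  obtain ⟨ψ, hψ, hψc⟩ := hc
  obtain ⟨φ, hφ, hφd⟩ := hd
  refine ⟨φ.comp ψ, fun r x => ?_, ?_⟩
  · rw [AddMonoidHom.comp_apply, pow_mul', hψ, hφ, AddMonoidHom.comp_apply]
  · rw [AddMonoidHom.comp_apply, hψ, hψc, mul_one, hφd]

theorem exists_of_mem_sup_pow [IsLocalRing R] {q n : ℕ} {a b : Ideal R} {d : R}
    (h : SplitsFrob R q d) (hd : d ∈ (a ⊔ b) ^ n) :
    ∃ i j, i + j = n ∧ ∃ x ∈ a ^ i, x ∈ b ^ j ∧ SplitsFrob R q x := by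
  obtain ⟨ψ, hψ, hψd⟩ := h
  rw [Ideal.sup_pow_eq_sum_antidiagonal] at hd
  obtain ⟨⟨i, j⟩, hij, x, hx, hψx⟩ :=
    exists_isUnit_apply_of_mem_sum ψ hd (by rw [hψd]; exact isUnit_one)
  exact ⟨i, j, mem_antidiagonal.mp hij, x, Ideal.mul_le_left hx, Ideal.mul_le_right hx,
    of_isUnit_apply hψ hψx⟩

end SplitsFrob

variable {p : ℕ} {a b : Ideal R}

theorem stronglyFPurePair_of_mem_pow (hp : p ≠ 0) {e i : ℕ} {x : R} (hx : x ∈ a ^ i)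
    (hs : SplitsFrob R (p ^ e) x) : StronglyFPurePair R p a (i / (p : ℝ) ^ e) :=
  ⟨e, x, by rwa [div_mul_cancel₀ _ (by positivity), Nat.ceil_natCast], hs⟩

theorem StronglyFPurePair.fpurePair (hFP : FPureRing R p) {t : ℝ} (ht : 0 ≤ t)
    (h : StronglyFPurePair R p a t) : FPurePair R p a t := by
  obtain ⟨e₁, d, hd, hs⟩ := h
  have hlevel : ∀ e, e₁ ≤ e → ∃ x ∈ a ^ ⌈t * (p : ℝ) ^ e⌉₊, SplitsFrob R (p ^ e) x := by
    refine Nat.le_induction ⟨d, hd, hs⟩ fun e _ ⟨x, hx, hxs⟩ => ⟨x ^ p, ?_, ?_⟩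
    · have hceil : ⌈t * (p : ℝ) ^ (e + 1)⌉₊ ≤ ⌈t * (p : ℝ) ^ e⌉₊ * p := by
        refine Nat.ceil_le.mpr ?_
        rw [pow_succ, ← mul_assoc]
        push_cast
        exact mul_le_mul_of_nonneg_right (Nat.le_ceil _) (Nat.cast_nonneg p)
      exact Ideal.pow_le_pow_right hceil (pow_mul a _ p ▸ Ideal.pow_mem_pow hx p)
    · simpa [pow_succ'] using (hFP 1).comp hxs
  refine ⟨e₁, fun e he => ?_⟩
  obtain ⟨x, hx, hxs⟩ := hlevel e he
  have hexp : ⌊t * ((p : ℝ) ^ e - 1)⌋₊ ≤ ⌈t * (p : ℝ) ^ e⌉₊ :=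
    (Nat.floor_le_floor (mul_le_mul_of_nonneg_left (sub_le_self _ zero_le_one) ht)).trans
      (Nat.floor_le_ceil _)
  exact ⟨x, Ideal.pow_le_pow_right hexp hx, hxs⟩

variable (R p) in
def fptSet (a : Ideal R) : Set ℝ :=
  {s | 0 ≤ s ∧ FPurePair R p a s}

theorem fptSet_mono (hab : a ≤ b) : fptSet R p a ⊆ fptSet R p b := by
  rintro s ⟨hs0, e₀, hs⟩
  refine ⟨hs0, e₀, fun e he => ?_⟩
  obtain ⟨d, hd, hsplit⟩ := hs e he
  exact ⟨d, Ideal.pow_right_mono hab _ hd, hsplit⟩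

theorem fpt_nonneg : 0 ≤ fpt R p a :=
  Real.sSup_nonneg fun _ hs => hs.1

theorem FPurePair.exists_le_add [IsLocalRing R] (hp : 1 < p) (hFP : FPureRing R p) {s ε : ℝ}
    (hs : FPurePair R p (a ⊔ b) s) (hε : 0 < ε) :
    ∃ t₁ ∈ fptSet R p a, ∃ t₂ ∈ fptSet R p b, s - ε ≤ t₁ + t₂ := by
  obtain ⟨e₀, hs⟩ := hs
  have hp' : (1 : ℝ) < p := by exact_mod_cast hp
  obtain ⟨e, he₀, hQ⟩ := ((eventually_ge_atTop e₀).and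
    ((tendsto_pow_atTop_atTop_of_one_lt hp').eventually_gt_atTop ((s + 1) / ε))).exists
  obtain ⟨d, hd, hsplit⟩ := hs e he₀
  obtain ⟨i, j, hij, x, hxa, hxb, hx⟩ := hsplit.exists_of_mem_sup_pow hd
  have hp0 : p ≠ 0 := by omega
  refine ⟨i / (p : ℝ) ^ e, ⟨by positivity, ?_⟩, j / (p : ℝ) ^ e, ⟨by positivity, ?_⟩, ?_⟩
  · exact (stronglyFPurePair_of_mem_pow hp0 hxa hx).fpurePair hFP (by positivity)
  · exact (stronglyFPurePair_of_mem_pow hp0 hxb hx).fpurePair hFP (by positivity)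
  · rw [← add_div, ← Nat.cast_add, hij, le_div_iff₀ (by positivity)]
    rw [div_lt_iff₀ hε] at hQ
    have hfloor := Nat.lt_floor_add_one (s * ((p : ℝ) ^ e - 1))
    nlinarith

end FPureThreshold

theorem stmt16_general (R : Type*) [CommRing R] [IsLocalRing R]
    (p : ℕ) (hp : p.Prime) (hFP : FPureRing R p)
    (a b : Ideal R) :
    fpt R p (a ⊔ b) ≤ fpt R p a + fpt R p b := by
  by_cases hbdd : BddAbove (fptSet R p a) ∧ BddAbove (fptSet R p b)
  · refine Real.sSup_le (fun s ⟨_, hs⟩ => le_of_forall_sub_le fun ε hε => ?_)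
      (add_nonneg fpt_nonneg fpt_nonneg)
    obtain ⟨t₁, ht₁, t₂, ht₂, hst⟩ := hs.exists_le_add hp.one_lt hFP hε
    exact hst.trans (add_le_add (le_csSup hbdd.1 ht₁) (le_csSup hbdd.2 ht₂))
  · have hunbdd : ¬BddAbove (fptSet R p (a ⊔ b)) := fun h =>
      hbdd ⟨h.mono (fptSet_mono le_sup_left), h.mono (fptSet_mono le_sup_right)⟩
    exact (Real.sSup_of_not_bddAbove hunbdd).trans_le (add_nonneg fpt_nonneg fpt_nonneg)

/-- `c(a) + c(b) ≥ c(a + b)` for ideals of positive height in an F-finite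
F-pure local ring. -/
theorem stmt16 (R : Type*) [CommRing R] [IsNoetherianRing R] [IsReduced R] [IsLocalRing R]
    (p : ℕ) (hp : p.Prime) [CharP R p] (hFF : FFinite R p) (hFP : FPureRing R p)
    (a b : Ideal R) (hha : 0 < idealHeight a) (hhb : 0 < idealHeight b) :
    fpt R p (a ⊔ b) ≤ fpt R p a + fpt R p b :=
  stmt16_general R p hp hFP a b
end
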